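/- Let k be a field, n a natural number, and M, N objects of S_k(ñ). Then dim_k Hom_{S_k(n)}(π(M), π(N)) = Σ_{g∈ℤ} dim_k Hom_{S_k(ñ)}(M, N[g]), where only finitely many summands on the right are nonzero; equivalently, there is an isomorphism of k-vector spaces Hom_{S_k(n)}(π M, π N) ≅ ⊕_{g∈ℤ} Hom_{S_k(ñ)}(M, N[g]). -/

import Mathlib

universe u

/-- An object of the category `S_k(n)`: a finite-dimensional `k`-vector space `V`,
a `k`-subspace `U ⊆ V`, and a linear operator `T : V → V` with `T ^ n = 0` and
`T (U) ⊆ U`. -/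
structure SObj (k : Type u) [Field k] (n : ℕ) : Type (u + 1) where
  carrier : Type u
  [instAddCommGroup : AddCommGroup carrier]
  [instModule : Module k carrier]
  [instFin : FiniteDimensional k carrier]
  U : Submodule k carrier
  T : carrier →ₗ[k] carrier
  pow_eq_zero : T ^ n = 0
  maps_U : ∀ x ∈ U, T x ∈ U

namespace SObj

attribute [instance] instAddCommGroup instModule instFin

variable {k : Type u} [Field k] {n : ℕ}

/-- Isomorphism of objects of `S_k(n)`: a linear bijection intertwining the operators
and carrying one invariant subspace onto the other. -/
def Iso (X Y : SObj k n) : Prop :=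
  ∃ e : X.carrier ≃ₗ[k] Y.carrier,
    (∀ v, e (X.T v) = Y.T (e v)) ∧ X.U.map e.toLinearMap = Y.U

/-- Indecomposability: the object is nonzero and there is no decomposition
`V = V₁ ⊕ V₂` into two nonzero `T`-invariant subspaces with
`U = (U ∩ V₁) ⊕ (U ∩ V₂)`. -/
def Indec (X : SObj k n) : Prop :=
  (∃ v : X.carrier, v ≠ 0) ∧
    ¬∃ V₁ V₂ : Submodule k X.carrier,
        V₁ ≠ ⊥ ∧ V₂ ≠ ⊥ ∧ IsCompl V₁ V₂ ∧
          (∀ x ∈ V₁, X.T x ∈ V₁) ∧ (∀ x ∈ V₂, X.T x ∈ V₂) ∧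
            X.U = X.U ⊓ V₁ ⊔ X.U ⊓ V₂

/-- The dimension pair `(dim_k V, dim_k U)` of an object of `S_k(n)`. -/
noncomputable def dimPair (X : SObj k n) : ℕ × ℕ :=
  (Module.finrank k X.carrier, Module.finrank k X.U)

end SObj

/-- An object of the covering category `S_k(ñ)`, encoded as an object `(V,U,T)` of
`S_k(n)` together with a ℤ-grading `V = ⊕_{i∈ℤ} V_i` (finitely many nonzero pieces)
such that `T(V_i) ⊆ V_{i−1}` and `U = ⊕_i (U ∩ V_i)`.  Here `V_i` plays the role of
the vector space `M_i` and `U ∩ V_i` the role of (the image under the inclusion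
`β_i` of) the vector space `M_{i'}`. -/
structure SCovObj (k : Type u) [Field k] (n : ℕ) extends SObj k n where
  grading : ℤ → Submodule k carrier
  indep : iSupIndep grading
  iSup_grading : (⨆ i, grading i) = ⊤
  finite_support : {i : ℤ | grading i ≠ ⊥}.Finite
  T_grading : ∀ i : ℤ, ∀ x ∈ grading i, T x ∈ grading (i - 1)
  U_grading : U = ⨆ i : ℤ, U ⊓ grading i

namespace SCovObj

variable {k : Type u} [Field k] {n : ℕ}

/-- Indecomposability in the covering category: the object is nonzero and admits no direct
decomposition into two nonzero graded subobjects compatible with `T` and `U`. -/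
def Indec (M : SCovObj k n) : Prop :=
  (∃ v : M.carrier, v ≠ 0) ∧
    ¬∃ V₁ V₂ : Submodule k M.carrier,
        V₁ ≠ ⊥ ∧ V₂ ≠ ⊥ ∧ IsCompl V₁ V₂ ∧
          (∀ x ∈ V₁, M.T x ∈ V₁) ∧ (∀ x ∈ V₂, M.T x ∈ V₂) ∧
            M.U = M.U ⊓ V₁ ⊔ M.U ⊓ V₂ ∧
            V₁ = (⨆ j, V₁ ⊓ M.grading j) ∧ V₂ = (⨆ j, V₂ ⊓ M.grading j)

/-- `x_i = dim_k M_i`, the total-space part of the dimension vector, as an integer. -/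
noncomputable def a (M : SCovObj k n) (i : ℤ) : ℤ :=
  (Module.finrank k (M.grading i) : ℤ)

/-- `x_{i'} = dim_k M_{i'}`, the subspace part of the dimension vector, as an integer. -/
noncomputable def b (M : SCovObj k n) (i : ℤ) : ℤ :=
  (Module.finrank k ↥(M.U ⊓ M.grading i) : ℤ)

/-- The quadratic form `χ` (for `n = 6`) evaluated at the dimension vector of `M`. -/
noncomputable def chi (M : SCovObj k n) : ℤ :=
  ∑ᶠ i : ℤ,
    (M.a i ^ 2 + M.b i ^ 2 - M.a i * M.a (i + 1) - M.b i * M.b (i + 1)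
      - M.b i * M.a i + M.a i * M.a (i + 6) + M.b i * M.b (i + 6) + M.b (i + 1) * M.a i)

/-- `π(x)`, first component: `Σ_i dim_k M_i`. -/
noncomputable def piV (M : SCovObj k n) : ℕ :=
  ∑ᶠ i : ℤ, Module.finrank k (M.grading i)

/-- `π(x)`, second component: `Σ_i dim_k M_{i'}`. -/
noncomputable def piU (M : SCovObj k n) : ℕ :=
  ∑ᶠ i : ℤ, Module.finrank k ↥(M.U ⊓ M.grading i)

/-- `t(x) = #{i ∈ ℤ : M_i ≠ 0}`, the size of the support of the total space. -/
noncomputable def tsupp (M : SCovObj k n) : ℕ :=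
  {i : ℤ | M.grading i ≠ ⊥}.ncard

end SCovObj

/-- The space of morphisms `(V,U,T) → (V',U',T')` in `S_k(n)`: linear maps `f : V → V'`
with `f(U) ⊆ U'` and `f ∘ T = T' ∘ f`, as a `k`-subspace of all linear maps. -/
def homS {k : Type u} [Field k] {n : ℕ} (X Y : SObj k n) :
    Submodule k (X.carrier →ₗ[k] Y.carrier) where
  carrier := {f | (∀ x ∈ X.U, f x ∈ Y.U) ∧ f ∘ₗ X.T = Y.T ∘ₗ f}
  add_mem' := by
    rintro f g ⟨hf1, hf2⟩ ⟨hg1, hg2⟩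
    exact ⟨fun x hx => Y.U.add_mem (hf1 x hx) (hg1 x hx),
      by rw [LinearMap.add_comp, LinearMap.comp_add, hf2, hg2]⟩
  zero_mem' := ⟨fun x _ => by simp, by rw [LinearMap.zero_comp, LinearMap.comp_zero]⟩
  smul_mem' := by
    rintro c f ⟨hf1, hf2⟩
    exact ⟨fun x hx => by simpa using Y.U.smul_mem c (hf1 x hx),
      by rw [LinearMap.smul_comp, hf2, LinearMap.comp_smul]⟩

/-- The space of morphisms `M → N[g]` in `S_k(ñ)`: morphisms of the underlying triples which
moreover shift the grading by `g`, i.e. `f(M_i) ⊆ N_{i−g}` for all `i`.  (Recall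
`N[g]_i = N_{i−g}`.) -/
def homCov {k : Type u} [Field k] {n : ℕ} (M N : SCovObj k n) (g : ℤ) :
    Submodule k (M.carrier →ₗ[k] N.carrier) where
  carrier := {f | ((∀ x ∈ M.U, f x ∈ N.U) ∧ f ∘ₗ M.T = N.T ∘ₗ f) ∧
    ∀ i : ℤ, ∀ x ∈ M.grading i, f x ∈ N.grading (i - g)}
  add_mem' := by
    rintro f f' ⟨⟨hf1, hf2⟩, hf3⟩ ⟨⟨hg1, hg2⟩, hg3⟩
    exact ⟨⟨fun x hx => N.U.add_mem (hf1 x hx) (hg1 x hx),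
      by rw [LinearMap.add_comp, LinearMap.comp_add, hf2, hg2]⟩,
      fun i x hx => (N.grading (i - g)).add_mem (hf3 i x hx) (hg3 i x hx)⟩
  zero_mem' := ⟨⟨fun x _ => by simp, by rw [LinearMap.zero_comp, LinearMap.comp_zero]⟩,
    fun i x _ => by simp⟩
  smul_mem' := by
    rintro c f ⟨⟨hf1, hf2⟩, hf3⟩
    exact ⟨⟨fun x hx => by simpa using N.U.smul_mem c (hf1 x hx),
      by rw [LinearMap.smul_comp, hf2, LinearMap.comp_smul]⟩,
      fun i x hx => by simpa using (N.grading (i - g)).smul_mem c (hf3 i x hx)⟩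

/-!
A linear map `f : V → W` between graded spaces splits into homogeneous components `f_g`, where
`f_g` is `f` followed by the projection onto `W_{i-g}` on each piece `V_i`. For finitely
supported gradings `f = ∑_g f_g`, and the spaces of maps of degree `g` are independent. Since `T`
is homogeneous of degree one and `U` is a graded subspace, every component of a morphism
`πM → πN` is again a morphism, hence a morphism `M → N[g]`; so
`Hom(πM, πN) = ⨁_g Hom(M, N[g])` and the dimensions add up.
-/

open DirectSum Pointwise

section GradedProjection

variable {ι R V : Type*} [DecidableEq ι] [CommSemiring R]
  [AddCommMonoid V] [Module R V]

noncomputable def gradedProj (𝒱 : ι → Submodule R V) [Decomposition 𝒱] (i : ι) : V →ₗ[R] V :=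
  (𝒱 i).subtype ∘ₗ component R ι (fun j => 𝒱 j) i ∘ₗ (decomposeLinearEquiv 𝒱).toLinearMap

variable {𝒱 : ι → Submodule R V} [Decomposition 𝒱]

theorem gradedProj_apply (i : ι) (x : V) : gradedProj 𝒱 i x = decompose 𝒱 x i := rfl

theorem gradedProj_mem (i : ι) (x : V) : gradedProj 𝒱 i x ∈ 𝒱 i := (decompose 𝒱 x i).2

theorem gradedProj_of_mem_same {i : ι} {x : V} (hx : x ∈ 𝒱 i) : gradedProj 𝒱 i x = x :=
  decompose_of_mem_same 𝒱 hx

theorem gradedProj_of_mem_ne {i j : ι} {x : V} (hx : x ∈ 𝒱 i) (hij : i ≠ j) :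
    gradedProj 𝒱 j x = 0 :=
  decompose_of_mem_ne 𝒱 hx hij

theorem sum_gradedProj {s : Finset ι} (hs : ∀ i, 𝒱 i ≠ ⊥ → i ∈ s) (x : V) :
    ∑ i ∈ s, gradedProj 𝒱 i x = x := by
  classical
  conv_rhs => rw [← sum_support_decompose 𝒱 x]
  refine (Finset.sum_subset (fun i hi => hs i fun h => ?_) fun i _ hi => ?_).symm
  · refine DFinsupp.mem_support_iff.mp hi ?_
    exact Subtype.ext ((Submodule.eq_bot_iff _).mp h _ (decompose 𝒱 x i).2)
  · rw [gradedProj_apply, DFinsupp.notMem_support_iff.mp hi, ZeroMemClass.coe_zero]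

theorem gradedProj_mem_of_mem {S : Submodule R V} (hS : S = ⨆ i, S ⊓ 𝒱 i) {x : V} (hx : x ∈ S)
    (j : ι) : gradedProj 𝒱 j x ∈ S := by
  suffices S ≤ S.comap (gradedProj 𝒱 j) from this hx
  calc S = ⨆ i, S ⊓ 𝒱 i := hS
    _ ≤ S.comap (gradedProj 𝒱 j) := iSup_le fun i y ⟨hyS, hy⟩ => by
      by_cases hij : i = j
      · subst hij
        rwa [Submodule.mem_comap, gradedProj_of_mem_same hy]
      · rw [Submodule.mem_comap, gradedProj_of_mem_ne hy hij]
        exact S.zero_mem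

end GradedProjection

section GradedLinearMap

variable {ι R V W : Type*} [AddCommGroup ι] [DecidableEq ι] [CommSemiring R]
  [AddCommMonoid V] [Module R V] [AddCommMonoid W] [Module R W]

def gradedHom (𝒱 : ι → Submodule R V) (𝒲 : ι → Submodule R W) (g : ι) :
    Submodule R (V →ₗ[R] W) where
  carrier := {f | ∀ i, ∀ x ∈ 𝒱 i, f x ∈ 𝒲 (i - g)}
  add_mem' hf hf' i x hx := add_mem (hf i x hx) (hf' i x hx)
  zero_mem' _ _ _ := zero_mem _
  smul_mem' c _ hf i x hx := Submodule.smul_mem _ c (hf i x hx)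

variable {𝒱 : ι → Submodule R V} {𝒲 : ι → Submodule R W} [Decomposition 𝒱] [Decomposition 𝒲]

theorem gradedProj_comp_of_mem_gradedHom {d : ι} {b : V →ₗ[R] W} (hb : b ∈ gradedHom 𝒱 𝒲 d)
    (i : ι) : gradedProj 𝒲 (i - d) ∘ₗ b = b ∘ₗ gradedProj 𝒱 i := by
  refine decompose_lhom_ext 𝒱 fun j => LinearMap.ext fun ⟨x, hx⟩ => ?_
  simp only [LinearMap.comp_apply, Submodule.subtype_apply]
  by_cases hij : j = i
  · subst hij
    rw [gradedProj_of_mem_same (hb j x hx), gradedProj_of_mem_same hx]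
  · rw [gradedProj_of_mem_ne (hb j x hx) (sub_left_injective.ne hij),
      gradedProj_of_mem_ne hx hij, map_zero]

variable (𝒱 𝒲) in
noncomputable def homComponent (g : ι) : (V →ₗ[R] W) →ₗ[R] (V →ₗ[R] W) where
  toFun f := toModule R ι W (fun i => gradedProj 𝒲 (i - g) ∘ₗ f ∘ₗ (𝒱 i).subtype) ∘ₗ
    (decomposeLinearEquiv 𝒱).toLinearMap
  map_add' f f' := decompose_lhom_ext 𝒱 fun i => LinearMap.ext fun x => by
    simp [decomposeLinearEquiv_apply_coe, toModule_lof]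
  map_smul' c f := decompose_lhom_ext 𝒱 fun i => LinearMap.ext fun x => by
    simp [decomposeLinearEquiv_apply_coe, toModule_lof]

theorem homComponent_apply_of_mem (g : ι) (f : V →ₗ[R] W) {i : ι} {x : V} (hx : x ∈ 𝒱 i) :
    homComponent 𝒱 𝒲 g f x = gradedProj 𝒲 (i - g) (f x) := by
  lift x to 𝒱 i using hx
  simp [homComponent, decomposeLinearEquiv_apply_coe, toModule_lof]

theorem homComponent_mem_gradedHom (g : ι) (f : V →ₗ[R] W) :
    homComponent 𝒱 𝒲 g f ∈ gradedHom 𝒱 𝒲 g := fun i x hx => by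
  rw [homComponent_apply_of_mem g f hx]
  exact gradedProj_mem _ _

theorem homComponent_of_mem_gradedHom {g : ι} {f : V →ₗ[R] W} (hf : f ∈ gradedHom 𝒱 𝒲 g) :
    homComponent 𝒱 𝒲 g f = f :=
  decompose_lhom_ext 𝒱 fun i => LinearMap.ext fun ⟨x, hx⟩ => by
    simp only [LinearMap.comp_apply, Submodule.subtype_apply]
    rw [homComponent_apply_of_mem g f hx, gradedProj_of_mem_same (hf i x hx)]

theorem homComponent_of_mem_gradedHom_of_ne {g g' : ι} {f : V →ₗ[R] W}
    (hf : f ∈ gradedHom 𝒱 𝒲 g') (hg : g' ≠ g) : homComponent 𝒱 𝒲 g f = 0 :=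
  decompose_lhom_ext 𝒱 fun i => LinearMap.ext fun ⟨x, hx⟩ => by
    simp only [LinearMap.comp_apply, Submodule.subtype_apply, LinearMap.zero_apply]
    rw [homComponent_apply_of_mem g f hx,
      gradedProj_of_mem_ne (hf i x hx) (sub_right_injective.ne hg)]

theorem iSupIndep_gradedHom : iSupIndep (gradedHom 𝒱 𝒲) := by
  refine fun g => Submodule.disjoint_def.mpr fun f hf hf' => ?_
  have hker : (⨆ (g') (_ : g' ≠ g), gradedHom 𝒱 𝒲 g') ≤ LinearMap.ker (homComponent 𝒱 𝒲 g) :=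
    iSup₂_le fun g' hg f' hf' => homComponent_of_mem_gradedHom_of_ne hf' hg
  rw [← homComponent_of_mem_gradedHom hf]
  exact hker hf'

theorem sum_homComponent {s t : Finset ι} (hs : ∀ i, 𝒱 i ≠ ⊥ → i ∈ s)
    (ht : ∀ i, 𝒲 i ≠ ⊥ → i ∈ t) (f : V →ₗ[R] W) :
    ∑ g ∈ s - t, homComponent 𝒱 𝒲 g f = f := by
  refine decompose_lhom_ext 𝒱 fun i => LinearMap.ext fun ⟨x, hx⟩ => ?_
  simp only [LinearMap.comp_apply, Submodule.subtype_apply, LinearMap.sum_apply]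
  by_cases hi : 𝒱 i = ⊥
  · rw [show x = 0 from (Submodule.eq_bot_iff _).mp hi x hx]
    simp
  simp_rw [homComponent_apply_of_mem _ f hx]
  -- `g ↦ i - g` maps `s - t` onto a superset of `t`
  rw [← Finset.sum_image (f := fun j => gradedProj 𝒲 j (f x)) (sub_right_injective.injOn)]
  refine sum_gradedProj (fun j hj => Finset.mem_image.mpr ⟨i - j, ?_, sub_sub_cancel i j⟩) _
  exact Finset.sub_mem_sub (hs i hi) (ht j hj)

theorem homComponent_mapsTo {S : Submodule R V} {S' : Submodule R W} (hS : S = ⨆ i, S ⊓ 𝒱 i)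
    (hS' : S' = ⨆ i, S' ⊓ 𝒲 i) {f : V →ₗ[R] W} (hf : ∀ x ∈ S, f x ∈ S') (g : ι) :
    ∀ x ∈ S, homComponent 𝒱 𝒲 g f x ∈ S' := by
  suffices S ≤ S'.comap (homComponent 𝒱 𝒲 g f) from fun x hx => this hx
  calc S = ⨆ i, S ⊓ 𝒱 i := hS
    _ ≤ S'.comap (homComponent 𝒱 𝒲 g f) := iSup_le fun i y ⟨hyS, hy⟩ => by
      rw [Submodule.mem_comap, homComponent_apply_of_mem g f hy]
      exact gradedProj_mem_of_mem hS' (hf y hyS) _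

theorem homComponent_comp_comm {d : ι} {a : V →ₗ[R] V} {b : W →ₗ[R] W}
    (ha : a ∈ gradedHom 𝒱 𝒱 d) (hb : b ∈ gradedHom 𝒲 𝒲 d) {f : V →ₗ[R] W}
    (hf : f ∘ₗ a = b ∘ₗ f) (g : ι) :
    homComponent 𝒱 𝒲 g f ∘ₗ a = b ∘ₗ homComponent 𝒱 𝒲 g f :=
  decompose_lhom_ext 𝒱 fun i => LinearMap.ext fun ⟨x, hx⟩ => by
    simp only [LinearMap.comp_apply, Submodule.subtype_apply]
    rw [homComponent_apply_of_mem g f (ha i x hx), homComponent_apply_of_mem g f hx,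
      ← LinearMap.comp_apply f a, hf, sub_right_comm, LinearMap.comp_apply,
      ← LinearMap.comp_apply (gradedProj 𝒲 _), gradedProj_comp_of_mem_gradedHom hb,
      LinearMap.comp_apply]

theorem iSup_inf_gradedHom {S : Submodule R (V →ₗ[R] W)}
    (hS : ∀ g, ∀ f ∈ S, homComponent 𝒱 𝒲 g f ∈ S) (h𝒱 : {i | 𝒱 i ≠ ⊥}.Finite)
    (h𝒲 : {i | 𝒲 i ≠ ⊥}.Finite) : ⨆ g, S ⊓ gradedHom 𝒱 𝒲 g = S := by
  refine le_antisymm (iSup_le fun g => inf_le_left) fun f hf => ?_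
  rw [← sum_homComponent (fun i => h𝒱.mem_toFinset.mpr) (fun i => h𝒲.mem_toFinset.mpr) f]
  exact Submodule.sum_mem _ fun g _ =>
    Submodule.mem_iSup_of_mem g ⟨hS g f hf, homComponent_mem_gradedHom g f⟩

end GradedLinearMap

section Finrank

variable {ι k V : Type*} [Field k] [AddCommGroup V] [Module k V] [FiniteDimensional k V]
  {A : ι → Submodule k V}

theorem iSupIndep.finrank_finsetSup (hA : iSupIndep A) (s : Finset ι) :
    Module.finrank k ↥(s.sup A) = ∑ i ∈ s, Module.finrank k (A i) := by
  classical
  induction s using Finset.cons_induction with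
  | empty => simp
  | cons a s ha ih =>
    have hdisj : Disjoint (A a) (s.sup A) :=
      (hA a).mono_right <| Finset.sup_le fun j hj =>
        le_iSup₂_of_le j (ne_of_mem_of_not_mem hj ha) le_rfl
    rw [Finset.sup_cons, Finset.sum_cons, ← ih, ← Submodule.finrank_sup_add_finrank_inf_eq,
      disjoint_iff.mp hdisj, finrank_bot, add_zero]

theorem iSupIndep.finrank_iSup (hA : iSupIndep A) :
    Module.finrank k ↥(⨆ i, A i) = ∑ᶠ i, Module.finrank k (A i) := by
  have hfin := Submodule.finite_ne_bot_of_iSupIndep hA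
  have hsup : (⨆ i, A i) = hfin.toFinset.sup A := by
    rw [Finset.sup_eq_iSup]
    refine le_antisymm (iSup_le fun i => ?_) (iSup₂_le fun i _ => le_iSup A i)
    by_cases hi : A i = ⊥
    · exact hi.trans_le bot_le
    · exact le_iSup₂_of_le i (hfin.mem_toFinset.mpr hi) le_rfl
  rw [hsup, hA.finrank_finsetSup, finsum_eq_sum_of_support_subset]
  intro i hi
  exact hfin.mem_toFinset.mpr fun h => hi (by simp [h])

end Finrank

namespace SCovObj

variable {k : Type u} [Field k] {n : ℕ} (M : SCovObj k n)

noncomputable instance : Decomposition M.grading :=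
  (isInternal_submodule_of_iSupIndep_of_iSup_eq_top M.indep M.iSup_grading).chooseDecomposition

theorem T_mem_gradedHom : M.T ∈ gradedHom M.grading M.grading 1 := M.T_grading

end SCovObj

section HomDecomposition

variable {k : Type u} [Field k] {n : ℕ} {M N : SCovObj k n}

theorem homCov_eq_homS_inf_gradedHom (g : ℤ) :
    homCov M N g = homS M.toSObj N.toSObj ⊓ gradedHom M.grading N.grading g := rfl

theorem homComponent_mem_homS {f : M.carrier →ₗ[k] N.carrier}
    (hf : f ∈ homS M.toSObj N.toSObj) (g : ℤ) :
    homComponent M.grading N.grading g f ∈ homS M.toSObj N.toSObj :=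
  ⟨homComponent_mapsTo M.U_grading N.U_grading hf.1 g,
    homComponent_comp_comm M.T_mem_gradedHom N.T_mem_gradedHom hf.2 g⟩

variable (M N)

theorem iSup_homCov : ⨆ g, homCov M N g = homS M.toSObj N.toSObj := by
  simp_rw [homCov_eq_homS_inf_gradedHom]
  exact iSup_inf_gradedHom (fun g _ hf => homComponent_mem_homS hf g)
    M.finite_support N.finite_support

theorem iSupIndep_homCov : iSupIndep (homCov M N) :=
  iSupIndep_gradedHom.mono fun g => (homCov_eq_homS_inf_gradedHom g).trans_le inf_le_right

end HomDecomposition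

/-- (2.2.2) For objects `M, N` of `S_k(ñ)`,
`dim Hom_{S(n)}(πM, πN) = Σ_{g∈ℤ} dim Hom_{S(ñ)}(M, N[g])`, with only finitely many
nonzero summands. -/
theorem stmt11 (k : Type u) [Field k] (n : ℕ) (M N : SCovObj k n) :
    {g : ℤ | homCov M N g ≠ ⊥}.Finite ∧
    Module.finrank k (homS M.toSObj N.toSObj) =
      ∑ᶠ g : ℤ, Module.finrank k (homCov M N g) := by
  have hindep := iSupIndep_homCov M N
  refine ⟨Submodule.finite_ne_bot_of_iSupIndep hindep, ?_⟩
  rw [← iSup_homCov, hindep.finrank_iSup]
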